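/- arXiv:2504.12883 — 6 statements merged into one kernel-verified Lean document; each statement's English description precedes it below -/
import Mathlib

section
/- (Optimality of the time-dependent mirror flow for underdetermined linear regression.) Let Z be a real m×d matrix, Y ∈ ℝ^m, f̃ : ℝ^m → ℝ a differentiable function, and define the loss F(x) = f̃(Z x − Y). Let T > 0 and let (R_t)_{t ≥ 0} be a family of differentiable functions ℝ^d → ℝ such that R_t = R_T for all t ≥ T, R_T is convex, and the gradient map x ↦ ∇R_T(x) is continuous. Let x : [0,∞) → ℝ^d be a curve satisfying the time-dependent mirror flow: ∇R_0(x_0) = 0 and, for every t ≥ 0, the map s ↦ ∇R_s(x_s) has derivative −∇F(x_t) = −Zᵀ ∇f̃(Z x_t − Y) at time t. If x_t converges as t → ∞ to a limit x_∞ satisfying Z x_∞ = Y, then x_∞ minimizes the changed regularizer R_T among all interpolating solutions: for every x ∈ ℝ^d with Z x = Y, R_T(x_∞) ≤ R_T(x). -/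
open Matrix Filter Set
open RealInnerProductSpace
open scoped Gradient

/-!
Along the flow, `∇R_t(x_t)` moves only in the range of `Zᵀ`, so its inner product with any
`v ∈ ker Z` is conserved; it starts at `0`. For `t ≥ T` this is `⟪∇R_T(x_t), v⟫`, and letting
`t → ∞` gives `⟪∇R_T(x_∞), x' - x_∞⟫ = 0` for every interpolating `x'`. The first-order
characterisation of convexity then yields `R_T(x_∞) ≤ R_T(x')`.
-/

theorem ConvexOn.add_inner_gradient_le {E : Type*} [NormedAddCommGroup E]
    [InnerProductSpace ℝ E] [CompleteSpace E] {s : Set E} {f : E → ℝ} (hf : ConvexOn ℝ s f)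
    {a b : E} (ha : a ∈ s) (hb : b ∈ s) (hfa : DifferentiableAt ℝ f a) :
    f a + ⟪∇ f a, b - a⟫ ≤ f b := by
  have hconv : ConvexOn ℝ (AffineMap.lineMap (k := ℝ) a b ⁻¹' s)
      (f ∘ AffineMap.lineMap a b) :=
    hf.comp_affineMap _
  have hderiv : HasDerivAt (f ∘ AffineMap.lineMap (k := ℝ) a b) ⟪∇ f a, b - a⟫ 0 := by
    rw [inner_gradient_left]
    refine HasFDerivAt.comp_hasDerivAt (0 : ℝ) ?_ AffineMap.hasDerivAt_lineMap
    simpa using hfa.hasFDerivAt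
  have := hconv.le_slope_of_hasDerivAt (by simpa using ha) (by simpa using hb) one_pos hderiv
  simp only [slope_def_field, Function.comp_apply, AffineMap.lineMap_apply_zero,
    AffineMap.lineMap_apply_one, sub_zero, div_one] at this
  linarith

theorem inner_eq_inner_zero_of_inner_deriv_eq_zero {E : Type*} [NormedAddCommGroup E]
    [InnerProductSpace ℝ E] {g g' : ℝ → E} {v : E}
    (hg : ∀ t, 0 ≤ t → HasDerivAt g (g' t) t) (hv : ∀ t, 0 ≤ t → ⟪g' t, v⟫ = 0)
    {t : ℝ} (ht : 0 ≤ t) : ⟪g t, v⟫ = ⟪g 0, v⟫ := by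
  have hderiv : ∀ s, 0 ≤ s → HasDerivAt (fun s => ⟪g s, v⟫) 0 s := fun s hs => by
    simpa [hv s hs] using (hg s hs).inner ℝ (hasDerivAt_const s v)
  exact constant_of_has_deriv_right_zero
    (fun s hs => (hderiv s hs.1).continuousAt.continuousWithinAt)
    (fun s hs => (hderiv s hs.1).hasDerivWithinAt) t (right_mem_Icc.2 ht)

theorem inner_toLp_transpose_mulVec_eq_zero {m d : ℕ} (Z : Matrix (Fin m) (Fin d) ℝ)
    (w : Fin m → ℝ) {v : EuclideanSpace ℝ (Fin d)} (hv : Z *ᵥ v = 0) :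
    ⟪WithLp.toLp 2 (Zᵀ *ᵥ w), v⟫ = 0 := by
  simp only [EuclideanSpace.inner_eq_star_dotProduct, star_trivial, mulVec_transpose]
  rw [dotProduct_comm, ← dotProduct_mulVec, hv, dotProduct_zero]

theorem stmt_1_general {m d : ℕ} (Z : Matrix (Fin m) (Fin d) ℝ) (Y : Fin m → ℝ)
    (ftil : EuclideanSpace ℝ (Fin m) → ℝ)
    (T : ℝ)
    (R : ℝ → EuclideanSpace ℝ (Fin d) → ℝ)
    (hRdiff : ∀ t, Differentiable ℝ (R t))
    (hRT : ∀ t, T ≤ t → R t = R T)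
    (hRTconv : ConvexOn ℝ Set.univ (R T))
    (hgradcont : Continuous (fun x => gradient (R T) x))
    (x : ℝ → EuclideanSpace ℝ (Fin d))
    (hx0 : gradient (R 0) (x 0) = 0)
    (hflow : ∀ t, 0 ≤ t → HasDerivAt (fun s => gradient (R s) (x s))
      (-(WithLp.toLp 2 (Zᵀ.mulVec (WithLp.ofLp (gradient ftil (WithLp.toLp 2 (Z.mulVec (x t) - Y : Fin m → ℝ) : EuclideanSpace ℝ (Fin m)) : EuclideanSpace ℝ (Fin m)) : Fin m → ℝ)
          : Fin d → ℝ) : EuclideanSpace ℝ (Fin d))) t)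
    (xinf : EuclideanSpace ℝ (Fin d))
    (hconv : Tendsto x atTop (nhds xinf))
    (hinterp : Z.mulVec xinf = Y) :
    ∀ x' : EuclideanSpace ℝ (Fin d), Z.mulVec x' = Y → R T xinf ≤ R T x' := by
  intro x' hx'
  have hker : Z *ᵥ (x' - xinf).ofLp = 0 := by
    rw [WithLp.ofLp_sub, mulVec_sub, hx', hinterp, sub_self]
  have hconserved : ∀ t, 0 ≤ t → ⟪∇ (R t) (x t), x' - xinf⟫ = 0 := fun t ht => by
    rw [inner_eq_inner_zero_of_inner_deriv_eq_zero hflow (fun s _ => by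
      rw [inner_neg_left, inner_toLp_transpose_mulVec_eq_zero Z _ hker, neg_zero]) ht, hx0,
      inner_zero_left]
  have hlim : Tendsto (fun t => ⟪∇ (R t) (x t), x' - xinf⟫) atTop
      (nhds ⟪∇ (R T) xinf, x' - xinf⟫) := by
    refine (((hgradcont.tendsto xinf).comp hconv).inner tendsto_const_nhds).congr' ?_
    filter_upwards [eventually_ge_atTop T] with t ht
    simp only [Function.comp_apply, hRT t ht]
  have horth : ⟪∇ (R T) xinf, x' - xinf⟫ = 0 :=
    tendsto_nhds_unique hlim <| tendsto_const_nhds.congr' <|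
      (eventually_ge_atTop 0).mono fun t ht => (hconserved t ht).symm
  have := hRTconv.add_inner_gradient_le (mem_univ xinf) (mem_univ x') (hRdiff T xinf)
  rwa [horth, add_zero] at this

/-- Optimality of the time-dependent mirror flow for underdetermined linear
regression: if the flow converges to an interpolating solution `x∞`, then `x∞`
minimizes the changed regularizer `R_T` among all interpolating solutions. -/
theorem stmt_1 {m d : ℕ} (Z : Matrix (Fin m) (Fin d) ℝ) (Y : Fin m → ℝ)
    (ftil : EuclideanSpace ℝ (Fin m) → ℝ) (hftil : Differentiable ℝ ftil)
    (T : ℝ) (hT : 0 < T)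
    (R : ℝ → EuclideanSpace ℝ (Fin d) → ℝ)
    (hRdiff : ∀ t, Differentiable ℝ (R t))
    (hRT : ∀ t, T ≤ t → R t = R T)
    (hRTconv : ConvexOn ℝ Set.univ (R T))
    (hgradcont : Continuous (fun x => gradient (R T) x))
    (x : ℝ → EuclideanSpace ℝ (Fin d))
    (hx0 : gradient (R 0) (x 0) = 0)
    (hflow : ∀ t, 0 ≤ t → HasDerivAt (fun s => gradient (R s) (x s))
      (-(WithLp.toLp 2 (Zᵀ.mulVec (WithLp.ofLp (gradient ftil (WithLp.toLp 2 (Z.mulVec (x t) - Y : Fin m → ℝ) : EuclideanSpace ℝ (Fin m)) : EuclideanSpace ℝ (Fin m)) : Fin m → ℝ)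
          : Fin d → ℝ) : EuclideanSpace ℝ (Fin d))) t)
    (xinf : EuclideanSpace ℝ (Fin d))
    (hconv : Tendsto x atTop (nhds xinf))
    (hinterp : Z.mulVec xinf = Y) :
    ∀ x' : EuclideanSpace ℝ (Fin d), Z.mulVec x' = Y → R T xinf ≤ R T x' :=
  stmt_1_general Z Y ftil T R hRdiff hRT hRTconv hgradcont x hx0 hflow xinf hconv hinterp
end

section
/- (Bôcher's Wronskian criterion, used in the proof of Corollary 3.5.) Let u, v : ℝ → ℝ be real-analytic functions on all of ℝ such that the Wronskian vanishes identically, i.e. u(x)·v'(x) − v(x)·u'(x) = 0 for all x ∈ ℝ. If u is not identically zero, then there exists a constant c ∈ ℝ such that v(x) = c·u(x) for all x ∈ ℝ. -/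
/-!
On an interval where `u` does not vanish, the quotient rule turns the Wronskian into
`u ^ 2 * (v / u)'`, so `v / u` is locally constant there and `v = c * u` near any point where
`u ≠ 0`. The identity principle for real-analytic functions spreads this equality to all of `ℝ`.
-/

open Set Filter Topology

variable {𝕜 : Type*} [RCLike 𝕜] {u v : 𝕜 → 𝕜}

theorem hasDerivAt_div_of_wronskian_eq_zero {x : 𝕜} (hu : DifferentiableAt 𝕜 u x)
    (hv : DifferentiableAt 𝕜 v x) (hux : u x ≠ 0)
    (hW : u x * deriv v x - v x * deriv u x = 0) :
    HasDerivAt (fun y => v y / u y) 0 x := by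
  have := hv.hasDerivAt.div hu.hasDerivAt hux
  rwa [mul_comm (deriv v x), hW, zero_div] at this

theorem IsOpen.exists_eqOn_const_mul_of_wronskian_eq_zero {s : Set 𝕜} (hs : IsOpen s)
    (hs' : IsPreconnected s) (hu : DifferentiableOn 𝕜 u s) (hv : DifferentiableOn 𝕜 v s)
    (hu₀ : ∀ x ∈ s, u x ≠ 0) (hW : ∀ x ∈ s, u x * deriv v x - v x * deriv u x = 0) :
    ∃ c, EqOn v (fun x => c * u x) s := by
  have hquot : ∀ x ∈ s, HasDerivAt (fun y => v y / u y) 0 x := fun x hx =>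
    hasDerivAt_div_of_wronskian_eq_zero ((hu x hx).differentiableAt (hs.mem_nhds hx))
      ((hv x hx).differentiableAt (hs.mem_nhds hx)) (hu₀ x hx) (hW x hx)
  obtain ⟨c, hc⟩ := hs.exists_is_const_of_deriv_eq_zero hs'
    (fun x hx => (hquot x hx).differentiableAt.differentiableWithinAt)
    (fun x hx => (hquot x hx).deriv)
  exact ⟨c, fun x hx => (div_eq_iff (hu₀ x hx)).mp (hc x hx)⟩

/-- Bôcher's Wronskian criterion: two real-analytic functions on `ℝ` with
identically vanishing Wronskian are linearly dependent; if `u` is not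
identically zero, then `v` is a constant multiple of `u`. -/
theorem stmt_2 (u v : ℝ → ℝ) (hu : AnalyticOn ℝ u Set.univ) (hv : AnalyticOn ℝ v Set.univ)
    (hW : ∀ x : ℝ, u x * deriv v x - v x * deriv u x = 0)
    (hune : ∃ x : ℝ, u x ≠ 0) :
    ∃ c : ℝ, ∀ x : ℝ, v x = c * u x := by
  obtain ⟨x₀, hx₀⟩ := hune
  rw [analyticOn_univ] at hu hv
  have hud : Differentiable ℝ u := fun x => (hu x trivial).differentiableAt
  obtain ⟨ε, hε, hu₀⟩ := Metric.eventually_nhds_iff_ball.mp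
    ((hud x₀).continuousAt.eventually_ne hx₀)
  obtain ⟨c, hc⟩ := Metric.isOpen_ball.exists_eqOn_const_mul_of_wronskian_eq_zero
    (convex_ball x₀ ε).isPreconnected hud.differentiableOn
    (fun x _ => (hv x trivial).differentiableAt.differentiableWithinAt) hu₀ (fun x _ => hW x)
  have hloc : v =ᶠ[𝓝 x₀] fun x => c * u x :=
    Filter.eventually_of_mem (Metric.ball_mem_nhds x₀ hε) hc
  exact ⟨c, congrFun (hv.eq_of_eventuallyEq (analyticOnNhd_const.mul hu) hloc)⟩
end

section
/- (Scalar form of Corollary 3.5 on separable reparameterizations.) Let g, h : ℝ → ℝ be real-analytic functions on all of ℝ with g nonconstant. Then the per-coordinate commuting condition holds, namely g'(x)·h''(x) = h'(x)·g''(x) for all x ∈ ℝ, if and only if there exist constants c, d ∈ ℝ such that h(x) = c·g(x) + d for all x ∈ ℝ. -/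
/-!
Near a point where `g' ≠ 0`, the commuting condition says exactly that the Wronskian of `g'` and
`h'` vanishes, i.e. `(h' / g')' = 0`, so `h' = c g'` on a neighbourhood. Since `h' - c g'` is
analytic on the connected line, the identity principle extends this to all of `ℝ`, and
integrating gives `h = c g + d`. The converse is a direct computation.
-/

open Set Metric

section

variable {𝕜 : Type*} [RCLike 𝕜]

theorem exists_deriv_ne_zero_of_ne {G : Type*} [NormedAddCommGroup G] [NormedSpace 𝕜 G]
    {f : 𝕜 → G} (hf : Differentiable 𝕜 f) {x y : 𝕜}
    (hxy : f x ≠ f y) : ∃ z, deriv f z ≠ 0 := by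
  by_contra! h
  exact hxy (is_const_of_deriv_eq_zero hf h x y)

theorem IsOpen.exists_eqOn_const_mul_of_mul_deriv_eq {φ ψ : 𝕜 → 𝕜} {s : Set 𝕜} (hs : IsOpen s)
    (hs' : IsPreconnected s) (hφ : DifferentiableOn 𝕜 φ s) (hψ : DifferentiableOn 𝕜 ψ s)
    (hψ0 : ∀ x ∈ s, ψ x ≠ 0) (hW : ∀ x ∈ s, ψ x * deriv φ x = φ x * deriv ψ x) :
    ∃ c, ∀ x ∈ s, φ x = c * ψ x := by
  have hderiv : s.EqOn (deriv (φ / ψ)) 0 := by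
    intro x hx
    have hφx := (hφ.differentiableAt (hs.mem_nhds hx)).hasDerivAt
    have hψx := (hψ.differentiableAt (hs.mem_nhds hx)).hasDerivAt
    rw [(hφx.div hψx (hψ0 x hx)).deriv, Pi.zero_apply, div_eq_zero_iff, sub_eq_zero, mul_comm]
    exact Or.inl (hW x hx)
  obtain ⟨c, hc⟩ := hs.exists_is_const_of_deriv_eq_zero hs' (hφ.div hψ hψ0) hderiv
  exact ⟨c, fun x hx => by rw [← hc x hx, Pi.div_apply, div_mul_cancel₀ _ (hψ0 x hx)]⟩

theorem AnalyticOnNhd.exists_eq_const_mul_of_mul_deriv_eq {φ ψ : 𝕜 → 𝕜}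
    (hφ : AnalyticOnNhd 𝕜 φ univ) (hψ : AnalyticOnNhd 𝕜 ψ univ) {x₀ : 𝕜} (hx₀ : ψ x₀ ≠ 0)
    (hW : ∀ x, ψ x * deriv φ x = φ x * deriv ψ x) : ∃ c, φ = fun x => c * ψ x := by
  obtain ⟨ε, hε, hψ0⟩ :=
    eventually_nhds_iff_ball.1 ((hψ x₀ trivial).continuousAt.eventually_ne hx₀)
  obtain ⟨c, hc⟩ := isOpen_ball.exists_eqOn_const_mul_of_mul_deriv_eq
    (convex_ball x₀ ε).isPreconnected (hφ.differentiableOn.mono (subset_univ _))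
    (hψ.differentiableOn.mono (subset_univ _)) hψ0 fun x _ => hW x
  exact ⟨c, hφ.eq_of_eventuallyEq (analyticOnNhd_const.mul hψ)
    (Filter.eventually_of_mem (ball_mem_nhds x₀ hε) hc)⟩

end

/-- Scalar form of Corollary 3.5 on separable reparameterizations: for
real-analytic `g, h` with `g` nonconstant, the commuting condition
`g'·h'' = h'·g''` holds everywhere iff `h = c·g + d` for constants `c, d`. -/
theorem stmt_3 (g h : ℝ → ℝ) (hg : AnalyticOn ℝ g Set.univ) (hh : AnalyticOn ℝ h Set.univ)
    (hgnc : ∃ x y : ℝ, g x ≠ g y) :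
    (∀ x : ℝ, deriv g x * deriv (deriv h) x = deriv h x * deriv (deriv g) x) ↔
      ∃ c d : ℝ, ∀ x : ℝ, h x = c * g x + d := by
  rw [analyticOn_univ] at hg hh
  constructor
  · intro hW
    obtain ⟨x, y, hxy⟩ := hgnc
    obtain ⟨x₀, hx₀⟩ :=
      exists_deriv_ne_zero_of_ne (differentiableOn_univ.1 hg.differentiableOn) hxy
    obtain ⟨c, hc⟩ := hh.deriv.exists_eq_const_mul_of_mul_deriv_eq hg.deriv hx₀ hW
    obtain ⟨d, hd⟩ := isOpen_univ.exists_eq_add_of_deriv_eq isPreconnected_univ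
      hh.differentiableOn (hg.differentiableOn.const_mul c)
      (fun x _ => by rw [hc, deriv_const_mul_field'])
    exact ⟨c, d, fun x => hd (mem_univ x)⟩
  · rintro ⟨c, d, hcd⟩ x
    have hh' : deriv h = fun x => c * deriv g x := by
      rw [funext hcd, deriv_add_const', deriv_const_mul_field']
    rw [hh', deriv_const_mul_field']
    ring
end

section
/- (Depth-k reparameterizations do not commute with weight decay.) Fix k ≥ 3 and define g, h : ℝ^k → ℝ by g(w) = ∏_{i=1}^k w_i and h(w) = Σ_{i=1}^k w_i². Then for every w ∈ ℝ^k, the Lie bracket of the gradient vector fields satisfies, for each coordinate j, ([∇g, ∇h](w))_j = (4 − 2k) · ∏_{i ≠ j} w_i. In particular, for any w all of whose coordinates are nonzero, [∇g, ∇h](w) ≠ 0; hence g and h are not a commuting parameterization. -/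
/-!
Since `∇h(w) = 2w`, the bracket is `[∇g, ∇h](w) = 2 ∇g(w) - 2 D(∇g)(w) w`. The field `∇g`, whose
`j`-th entry is `∏_{i ≠ j} wᵢ`, is homogeneous of degree `k - 1`, so Euler's identity gives
`D(∇g)(w) w = (k - 1) ∇g(w)` and hence `[∇g, ∇h] = (4 - 2k) ∇g`, which is nonzero as soon as all
coordinates are nonzero and `k ≠ 2`.
-/

open Finset

section Euler

variable {𝕜 E G : Type*} [NontriviallyNormedField 𝕜] [NormedAddCommGroup E] [NormedSpace 𝕜 E]
  [NormedAddCommGroup G] [NormedSpace 𝕜 G]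

theorem fderiv_apply_self_of_homogeneous {F : E → G} {w : E} {m : ℕ}
    (hF : DifferentiableAt 𝕜 F w) (hhom : ∀ t : 𝕜, F (t • w) = t ^ m • F w) :
    fderiv 𝕜 F w w = (m : 𝕜) • F w := by
  have hray : HasDerivAt (fun t : 𝕜 => t • w) w 1 := by
    simpa using (hasDerivAt_id (1 : 𝕜)).smul_const w
  have hchain : HasDerivAt (fun t : 𝕜 => F (t • w)) (fderiv 𝕜 F w w) 1 :=
    hF.hasFDerivAt.comp_hasDerivAt_of_eq 1 hray (one_smul 𝕜 w).symm
  have hpow : HasDerivAt (fun t : 𝕜 => t ^ m • F w) ((m : 𝕜) • F w) 1 := by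
    simpa using (hasDerivAt_pow m (1 : 𝕜)).smul_const (F w)
  exact hchain.unique (by simpa only [hhom] using hpow)

theorem lieBracket_smul_id_of_homogeneous {X : E → E} {w : E} {m : ℕ} (c : 𝕜)
    (hX : DifferentiableAt 𝕜 X w) (hhom : ∀ t : 𝕜, X (t • w) = t ^ m • X w) :
    VectorField.lieBracket 𝕜 X (fun z => c • z) w = (c * (1 - m)) • X w := by
  have hscal : fderiv 𝕜 (fun z : E => c • z) w = c • ContinuousLinearMap.id 𝕜 E :=
    (c • ContinuousLinearMap.id 𝕜 E).hasFDerivAt.fderiv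
  rw [VectorField.lieBracket, hscal, map_smul, fderiv_apply_self_of_homogeneous hX hhom]
  simp only [smul_apply, ContinuousLinearMap.id_apply, smul_smul]
  rw [← sub_smul, mul_one_sub]

end Euler

namespace EuclideanSpace

variable {ι : Type*} [Fintype ι]

theorem hasGradientAt_sum_sq (w : EuclideanSpace ℝ ι) :
    HasGradientAt (fun z : EuclideanSpace ℝ ι => ∑ i, z i ^ 2) ((2 : ℝ) • w) w := by
  rw [hasGradientAt_iff_hasFDerivAt]
  simp only [← EuclideanSpace.real_norm_sq_eq]
  refine (hasStrictFDerivAt_norm_sq w).hasFDerivAt.congr_fderiv ?_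
  ext v
  simp

variable [DecidableEq ι]

noncomputable def prodErase (w : EuclideanSpace ℝ ι) : EuclideanSpace ℝ ι :=
  WithLp.toLp 2 fun j => ∏ i ∈ univ.erase j, w i

theorem hasGradientAt_prod (w : EuclideanSpace ℝ ι) :
    HasGradientAt (fun z : EuclideanSpace ℝ ι => ∏ i, z i) (prodErase w) w := by
  rw [hasGradientAt_iff_hasFDerivAt]
  refine (HasFDerivAt.finsetProd (u := univ) fun i _ =>
    (proj i : EuclideanSpace ℝ ι →L[ℝ] ℝ).hasFDerivAt (x := w)).congr_fderiv ?_
  ext v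
  simp [prodErase, PiLp.inner_apply, mul_comm]

theorem differentiable_prodErase : Differentiable ℝ (prodErase (ι := ι)) := by
  rw [differentiable_piLp]
  intro j
  simp only [prodErase]
  fun_prop

theorem prodErase_smul (t : ℝ) (w : EuclideanSpace ℝ ι) :
    prodErase (t • w) = t ^ (Fintype.card ι - 1) • prodErase w := by
  ext j
  simp [prodErase, prod_mul_distrib, card_erase_of_mem]

theorem prodErase_ne_zero [Nonempty ι] {w : EuclideanSpace ℝ ι} (hw : ∀ i, w i ≠ 0) :
    prodErase w ≠ 0 := by
  obtain ⟨j⟩ := ‹Nonempty ι›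
  intro h0
  have hj : ∏ i ∈ univ.erase j, w i = 0 := congr($h0 j)
  exact prod_ne_zero_iff.2 (fun i _ => hw i) hj

theorem lieBracket_gradient_prod_gradient_sum_sq (w : EuclideanSpace ℝ ι) :
    VectorField.lieBracket ℝ (gradient fun z : EuclideanSpace ℝ ι => ∏ i, z i)
        (gradient fun z => ∑ i, z i ^ 2) w =
      (2 * (1 - ((Fintype.card ι - 1 : ℕ) : ℝ))) • prodErase w := by
  have hg : (gradient fun z : EuclideanSpace ℝ ι => ∏ i, z i) = prodErase :=
    funext fun z => (hasGradientAt_prod z).gradient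
  have hh : (gradient fun z : EuclideanSpace ℝ ι => ∑ i, z i ^ 2) = fun z => (2 : ℝ) • z :=
    funext fun z => (hasGradientAt_sum_sq z).gradient
  rw [hg, hh]
  exact lieBracket_smul_id_of_homogeneous 2 (differentiable_prodErase w) (prodErase_smul · w)

end EuclideanSpace

/-- Depth-`k` reparameterizations do not commute with weight decay: for
`g(w) = ∏ᵢ wᵢ` and `h(w) = Σᵢ wᵢ²` with `k ≥ 3`, the Lie bracket of the gradient
fields has `j`-th coordinate `(4 − 2k)·∏_{i ≠ j} wᵢ`, and it is nonzero at any
point with all coordinates nonzero. -/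
theorem stmt_5 {k : ℕ} (hk : 3 ≤ k)
    (g h : EuclideanSpace ℝ (Fin k) → ℝ)
    (hg : ∀ w : EuclideanSpace ℝ (Fin k), g w = ∏ i, w i)
    (hh : ∀ w : EuclideanSpace ℝ (Fin k), h w = ∑ i, (w i) ^ 2) :
    (∀ (w : EuclideanSpace ℝ (Fin k)) (j : Fin k),
        (fderiv ℝ (fun z => gradient h z) w (gradient g w)
          - fderiv ℝ (fun z => gradient g z) w (gradient h w)) j
          = (4 - 2 * (k : ℝ)) * ∏ i ∈ Finset.univ.erase j, w i) ∧
    (∀ w : EuclideanSpace ℝ (Fin k), (∀ i, w i ≠ 0) →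
        fderiv ℝ (fun z => gradient h z) w (gradient g w)
          - fderiv ℝ (fun z => gradient g z) w (gradient h w) ≠ 0) := by
  have hcoeff : 2 * (1 - ((Fintype.card (Fin k) - 1 : ℕ) : ℝ)) = 4 - 2 * (k : ℝ) := by
    rw [Fintype.card_fin, Nat.cast_sub (by omega), Nat.cast_one]
    ring
  have hbracket (w : EuclideanSpace ℝ (Fin k)) :
      VectorField.lieBracket ℝ (gradient g) (gradient h) w = (4 - 2 * (k : ℝ)) • EuclideanSpace.prodErase w := by
    rw [← hcoeff, funext hg, funext hh]
    exact EuclideanSpace.lieBracket_gradient_prod_gradient_sum_sq w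
  have hcoeff_ne : 4 - 2 * (k : ℝ) ≠ 0 := by
    have : (3 : ℝ) ≤ k := by exact_mod_cast hk
    linarith
  have : Nonempty (Fin k) := ⟨⟨0, by omega⟩⟩
  exact ⟨fun w j => congr($(hbracket w) j),
    fun w hw => (hbracket w).trans_ne
      (smul_ne_zero hcoeff_ne (EuclideanSpace.prodErase_ne_zero hw))⟩
end

section
/- (Contracting property of the time-dependent hyperbolic entropy.) For every fixed x ∈ ℝ, the map A ↦ x·arcsinh(x/A) − √(x² + A²) is strictly decreasing on (0, ∞), with derivative with respect to A equal to −√(x² + A²)/A < 0. Consequently, since A(a) = 2 e^{2a} u₀ v₀ is increasing in a for u₀, v₀ > 0, the time-dependent hyperbolic entropy of Eq. (7) is contracting: it is nonincreasing in the accumulated regularization parameter a. -/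
/-!
Writing `S_x(A) = x · arsinh (x / A) - √(x² + A²)`, the chain rule gives
`S_x'(A) = -x² / (A √(x² + A²)) - A / √(x² + A²) = -√(x² + A²) / A`,
using `√(1 + (x / A)²) = √(x² + A²) / A` for `A > 0`. This is negative, so `S_x` is strictly
decreasing on `(0, ∞)`, and composing with the increasing positive map
`a ↦ 2 e^{2a} u₀ v₀` gives an antitone function of `a`.
-/

open Real Set

noncomputable section

namespace HyperbolicEntropy

def entropy (x A : ℝ) : ℝ := x * arsinh (x / A) - √(x ^ 2 + A ^ 2)

lemma sqrt_one_add_div_sq {A : ℝ} (x : ℝ) (hA : 0 < A) :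
    √(1 + (x / A) ^ 2) = √(x ^ 2 + A ^ 2) / A := by
  rw [div_pow, one_add_div (pow_ne_zero 2 hA.ne'), sqrt_div' _ (sq_nonneg A), sqrt_sq hA.le,
    add_comm]

lemma hasDerivAt_entropy (x : ℝ) {A : ℝ} (hA : 0 < A) :
    HasDerivAt (entropy x) (-√(x ^ 2 + A ^ 2) / A) A := by
  have hpos : 0 < x ^ 2 + A ^ 2 := by positivity
  have hdiv : HasDerivAt (fun A' ↦ x / A') (x * -(A ^ 2)⁻¹) A := by
    simpa only [div_eq_mul_inv] using (hasDerivAt_inv hA.ne').const_mul x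
  have harsinh := (hasDerivAt_arsinh (x / A)).comp A hdiv
  have hsum : HasDerivAt (fun A' ↦ x ^ 2 + A' ^ 2) (2 * A) A := by
    simpa using (hasDerivAt_pow 2 A).const_add (x ^ 2)
  refine ((harsinh.const_mul x).sub (hsum.sqrt hpos.ne')).congr_deriv ?_
  rw [sqrt_one_add_div_sq x hA]
  field_simp
  linear_combination sq_sqrt hpos.le

lemma neg_sqrt_div_neg (x : ℝ) {A : ℝ} (hA : 0 < A) : -√(x ^ 2 + A ^ 2) / A < 0 :=
  div_neg_of_neg_of_pos (neg_neg_of_pos (sqrt_pos.mpr (by positivity))) hA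

lemma strictAntiOn_entropy (x : ℝ) : StrictAntiOn (entropy x) (Ioi 0) :=
  strictAntiOn_of_deriv_neg (convex_Ioi 0)
    (fun _ hA ↦ (hasDerivAt_entropy x hA).continuousAt.continuousWithinAt)
    (fun A hA ↦ by
      rw [interior_Ioi] at hA
      rw [(hasDerivAt_entropy x hA).deriv]
      exact neg_sqrt_div_neg x hA)

lemma antitone_entropy_comp {g : ℝ → ℝ} (x : ℝ) (hg : Monotone g) (hg_pos : ∀ a, 0 < g a) :
    Antitone (fun a ↦ entropy x (g a)) :=
  fun _ _ hab ↦ (strictAntiOn_entropy x).antitoneOn (hg_pos _) (hg_pos _) (hg hab)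

lemma monotone_two_mul_exp_mul {u₀ v₀ : ℝ} (hu : 0 < u₀) (hv : 0 < v₀) :
    Monotone (fun a : ℝ ↦ 2 * exp (2 * a) * u₀ * v₀) :=
  fun _ _ hab ↦ by dsimp only; gcongr

end HyperbolicEntropy

end

open HyperbolicEntropy in
/-- Contracting property of the time-dependent hyperbolic entropy: for fixed `x`,
the map `A ↦ x·arcsinh(x/A) − √(x² + A²)` has derivative `−√(x² + A²)/A < 0` on
`(0, ∞)`, hence is strictly decreasing there; consequently, since
`A(a) = 2e^{2a}u₀v₀` is increasing in `a`, the time-dependent hyperbolic entropy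
is nonincreasing in the accumulated regularization parameter `a`. -/
theorem stmt_10 (x : ℝ) :
    (∀ A : ℝ, 0 < A →
      HasDerivAt (fun A' : ℝ => x * Real.arsinh (x / A') - Real.sqrt (x ^ 2 + A' ^ 2))
        (-Real.sqrt (x ^ 2 + A ^ 2) / A) A) ∧
    (∀ A : ℝ, 0 < A → -Real.sqrt (x ^ 2 + A ^ 2) / A < 0) ∧
    StrictAntiOn (fun A : ℝ => x * Real.arsinh (x / A) - Real.sqrt (x ^ 2 + A ^ 2))
      (Set.Ioi 0) ∧
    (∀ u₀ v₀ : ℝ, 0 < u₀ → 0 < v₀ →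
      Antitone (fun a : ℝ =>
        x * Real.arsinh (x / (2 * Real.exp (2 * a) * u₀ * v₀)) -
          Real.sqrt (x ^ 2 + (2 * Real.exp (2 * a) * u₀ * v₀) ^ 2))) :=
  ⟨fun _ hA ↦ hasDerivAt_entropy x hA, fun _ hA ↦ neg_sqrt_div_neg x hA,
    strictAntiOn_entropy x, fun _ _ hu hv ↦
      antitone_entropy_comp x (monotone_two_mul_exp_mul hu hv) fun _ ↦ by positivity⟩
end

section
/- (Properties of the time-dependent Legendre function for the reparameterization log(u) − log(v), Appendix E, in one coordinate.) Let p > 0 and q > 0 and define f : ℝ → ℝ by f(x) = p·log(e^{−2x} + 1) + q·log(e^{2x} + 1). Then: (i) f is differentiable with f'(x) = 2·(q·e^{2x} − p)/(1 + e^{2x}); (ii) f is strictly convex on ℝ; (iii) f has the unique global minimizer x* = (1/2)·log(p/q), i.e. f((1/2)·log(p/q)) < f(x) for all x ≠ (1/2)·log(p/q). -/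
/-!
The derivative `2 (q e^{2x} - p) / (1 + e^{2x}) = 2q - 2(p + q) / (1 + e^{2x})` is strictly
increasing, so `f` is strictly convex, and it vanishes exactly where `e^{2x} = p / q`. A strictly
convex function is strictly minimized at a critical point.
-/

open Real Set

lemma hasDerivAt_log_exp_mul_add_one (c x : ℝ) :
    HasDerivAt (fun x => log (exp (c * x) + 1)) (c * exp (c * x) / (exp (c * x) + 1)) x := by
  have hexp : HasDerivAt (fun x => exp (c * x) + 1) (exp (c * x) * c) x := by
    simpa using ((hasDerivAt_id x).const_mul c).exp.add_const 1
  convert hexp.log (by positivity) using 1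
  ring

noncomputable def legendreCoord (p q x : ℝ) : ℝ :=
  p * log (exp (-2 * x) + 1) + q * log (exp (2 * x) + 1)

lemma hasDerivAt_legendreCoord (p q x : ℝ) :
    HasDerivAt (legendreCoord p q) (2 * (q * exp (2 * x) - p) / (1 + exp (2 * x))) x := by
  refine (((hasDerivAt_log_exp_mul_add_one (-2) x).const_mul p).add
    ((hasDerivAt_log_exp_mul_add_one 2 x).const_mul q)).congr_deriv ?_
  rw [show -2 * x = -(2 * x) by ring, exp_neg]
  field_simp
  ring

lemma strictMono_legendreCoord_deriv {p q : ℝ} (hpq : 0 < p + q) :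
    StrictMono fun x : ℝ => 2 * (q * exp (2 * x) - p) / (1 + exp (2 * x)) := by
  have hrw : ∀ x : ℝ, 2 * (q * exp (2 * x) - p) / (1 + exp (2 * x)) =
      2 * q - 2 * (p + q) / (1 + exp (2 * x)) := fun x => by
    field_simp
    ring
  intro x y hxy
  simp only [hrw]
  have hexp : exp (2 * x) < exp (2 * y) := exp_lt_exp.2 (by linarith)
  gcongr

lemma StrictConvexOn.lt_of_hasDerivAt_eq_zero {S : Set ℝ} {f : ℝ → ℝ} {x₀ x : ℝ}
    (hf : StrictConvexOn ℝ S f) (hx₀ : x₀ ∈ S) (hx : x ∈ S) (hd : HasDerivAt f 0 x₀)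
    (hne : x ≠ x₀) : f x₀ < f x := by
  rcases hne.lt_or_gt with hlt | hgt
  · exact (slope_neg_iff_of_le hlt.le).1 (hf.slope_lt_of_hasDerivAt hx hx₀ hlt hd)
  · exact (slope_pos_iff_of_le hgt.le).1 (hf.lt_slope_of_hasDerivAt hx₀ hx hgt hd)

lemma mul_exp_two_mul_half_log_div {p q : ℝ} (hp : 0 < p) (hq : 0 < q) :
    q * exp (2 * ((1 / 2) * log (p / q))) = p := by
  rw [show 2 * ((1 / 2) * log (p / q)) = log (p / q) by ring, exp_log (div_pos hp hq)]
  field_simp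

/-- Properties of the time-dependent Legendre function for the
reparameterization `log u − log v` (Appendix E) in one coordinate:
`f(x) = p·log(e^{−2x} + 1) + q·log(e^{2x} + 1)` with `p, q > 0` is
differentiable with derivative `2(q·e^{2x} − p)/(1 + e^{2x})`, strictly convex
on `ℝ`, and has unique global minimizer `x* = (1/2)·log(p/q)`. -/
theorem stmt_12 (p q : ℝ) (hp : 0 < p) (hq : 0 < q) (f : ℝ → ℝ)
    (hf : ∀ x : ℝ,
      f x = p * Real.log (Real.exp (-2 * x) + 1) + q * Real.log (Real.exp (2 * x) + 1)) :
    (∀ x : ℝ,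
      HasDerivAt f (2 * (q * Real.exp (2 * x) - p) / (1 + Real.exp (2 * x))) x) ∧
    StrictConvexOn ℝ Set.univ f ∧
    (∀ x : ℝ, x ≠ (1 / 2) * Real.log (p / q) →
      f ((1 / 2) * Real.log (p / q)) < f x) := by
  obtain rfl : f = legendreCoord p q := funext hf
  have hderiv := hasDerivAt_legendreCoord p q
  have hconv : StrictConvexOn ℝ univ (legendreCoord p q) := by
    refine StrictMono.strictConvexOn_univ_of_deriv
      (continuous_iff_continuousAt.2 fun x => (hderiv x).continuousAt) ?_
    rw [funext fun x => (hderiv x).deriv]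
    exact strictMono_legendreCoord_deriv (add_pos hp hq)
  refine ⟨hderiv, hconv, fun x hx => hconv.lt_of_hasDerivAt_eq_zero trivial trivial ?_ hx⟩
  convert hderiv _ using 1
  rw [mul_exp_two_mul_half_log_div hp hq, sub_self, mul_zero, zero_div]
end
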